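/- arXiv:2511.21481 — 3 statements merged into one kernel-verified Lean document; each statement's English description precedes it below -/
import Mathlib

section
/- For every linear order X and every infinite <_{X^ω}-descending sequence σ = (σ_i)_{i≥0}, there exist a natural number t and a strictly increasing function h : ℕ → ℕ such that every σ_{h(i)} has at least t+1 pairs and the sequence i ↦ a_t^{h(i)} of t-th X-coefficients of the σ_{h(i)} is strictly <_X-decreasing. In particular, every infinite descending sequence in X^ω contains an infinite descending sequence in X. -/
/-- `l` represents an element of `X^ω`: a finite sequence of pairs `(b_t, a_t)` with
strictly decreasing natural-number exponents `b_0 > b_1 > … > b_m`. -/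
def IsExpSeq {X : Type*} (l : List (ℕ × X)) : Prop :=
  l.Chain' (fun p q => q.1 < p.1)

/-- The `s`-th component of `τ`: at even positions `2t` the exponent `b_t` (in `ℕ`),
at odd positions `2t+1` the coefficient `a_t` (in `X`); `none` if undefined. -/
def comp {X : Type*} (l : List (ℕ × X)) (s : ℕ) : Option (ℕ ⊕ X) :=
  if s % 2 = 0 then (l[s / 2]?).map (fun p => Sum.inl p.1)
  else (l[s / 2]?).map (fun p => Sum.inr p.2)

/-- The order on `X^ω`: `τ <_{X^ω} σ` iff `τ` is a proper initial segment of `σ`, or at the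
least index `s` where both components are defined and differ, the component of `τ` is smaller
(comparing even positions in `ℕ` and odd positions in `X`). -/
def XOmegaLt {X : Type*} [LinearOrder X] (τ σ : List (ℕ × X)) : Prop :=
  (τ <+: σ ∧ τ ≠ σ) ∨
  ∃ s, (∀ r, r < s → comp τ r = comp σ r) ∧
    ∃ a b, comp τ s = some a ∧ comp σ s = some b ∧ Sum.Lex (· < ·) (· < ·) a b

-- The first-difference colouring `c(i,j)` associated to a sequence `σ`:
-- `c(i,j) = |σ_j|` if `σ_j` is a proper initial segment of `σ_i`, and otherwise
-- the least `s` with `σ_i(s) ≠ σ_j(s)`.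
open Classical in
noncomputable def firstDiff {X : Type*} (σs : ℕ → List (ℕ × X)) (i j : ℕ) : ℕ :=
  if σs j <+: σs i ∧ σs j ≠ σs i then 2 * (σs j).length
  else sInf {s | comp (σs i) s ≠ comp (σs j) s}

/-!
Order `X^ω` as lists over `ℕ ×ₗ X`: `<_{X^ω}` is then the lexicographic order on lists, so a
descending sequence becomes a strictly antitone sequence of lists. Suppose its first `t` entries
are eventually constant. Then the `t`-th entries are eventually defined and antitone; their
exponents stabilise because `ℕ` is well founded, after which the coefficients either stabilise
too (and the first `t + 1` entries are eventually constant) or contain a strictly decreasing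
subsequence. If the first case happened for every `t`, the eventual leading exponent `b` would
have to head a list with at least `b + 2` entries, impossible when exponents strictly decrease.
-/

open Filter

namespace List

variable {α : Type*}

theorem lt_of_getElem?_lt [LT α] {l₁ l₂ : List α} {i : ℕ} {a b : α}
    (heq : ∀ j < i, l₁[j]? = l₂[j]?) (h₁ : l₁[i]? = some a) (h₂ : l₂[i]? = some b)
    (hab : a < b) : l₁ < l₂ := by
  obtain ⟨hi₁, rfl⟩ := getElem?_eq_some_iff.1 h₁
  obtain ⟨hi₂, rfl⟩ := getElem?_eq_some_iff.1 h₂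
  refine List.lt_iff_exists.2 (Or.inr ⟨i, hi₁, hi₂, fun j hj => ?_, hab⟩)
  simpa [getElem?_eq_getElem (hj.trans hi₁), getElem?_eq_getElem (hj.trans hi₂)] using heq j hj

theorem le_of_append_singleton_prefix_le [LinearOrder α] {l u v : List α} {a b : α}
    (hu : l ++ [a] <+: u) (hv : l ++ [b] <+: v) (h : u ≤ v) : a ≤ b := by
  obtain ⟨u, rfl⟩ := hu
  obtain ⟨v, rfl⟩ := hv
  by_contra! hba
  have : l ++ [b] ++ v < l ++ [a] ++ u := by
    simpa using List.append_left_lt (List.cons_lt_cons_iff.2 (Or.inl hba))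
  exact h.not_gt this

end List

theorem StrictAnti.exists_antitone_column {α : Type*} [LinearOrder α] {s : ℕ → List α}
    (hs : StrictAnti s) {l : List α} (hl : ∀ i, l <+: s i) :
    ∃ c : ℕ → α, Antitone c ∧ ∀ i, l ++ [c i] <+: s i := by
  have hcol : ∀ i, ∃ a, l ++ [a] <+: s i := by
    intro i
    obtain ⟨_ | ⟨a, r⟩, hr⟩ := hl i
    -- `s i = l` would be a prefix of, hence `≤`, its successor `s (i + 1)`
    · exact absurd (hl (i + 1)).le (by simpa [← hr] using hs (Nat.lt_succ_self i))
    · exact ⟨a, r, by simp [← hr]⟩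
  choose c hc using hcol
  refine ⟨c, fun i j hij => ?_, hc⟩
  exact List.le_of_append_singleton_prefix_le (hc j) (hc i) (hs.antitone hij)

theorem Antitone.eventually_const_or_exists_strictAnti_comp {β : Type*} [LinearOrder β]
    {g : ℕ → β} (hg : Antitone g) :
    (∃ b, ∀ᶠ i in atTop, g i = b) ∨ ∃ φ : ℕ → ℕ, StrictMono φ ∧ StrictAnti (g ∘ φ) := by
  obtain ⟨φ, hφ | hφ⟩ := exists_increasing_or_nonincreasing_subseq (· > ·) g
  · exact Or.inr ⟨φ, φ.strictMono, fun m n h => hφ m n h⟩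
  · refine Or.inl ⟨g (φ 0), eventually_atTop.2 ⟨φ 0, fun i hi => le_antisymm (hg hi) ?_⟩⟩
    calc g (φ 0) ≤ g (φ (i + 1)) := not_lt.1 (hφ 0 (i + 1) i.succ_pos)
      _ ≤ g i := hg ((Nat.le_succ i).trans (φ.strictMono.id_le _))

theorem Antitone.eventually_const_or_exists_strictAnti_snd {α β : Type*} [LinearOrder α]
    [WellFoundedLT α] [LinearOrder β] {c : ℕ → α ×ₗ β} (hc : Antitone c) :
    (∃ a, ∀ᶠ i in atTop, c i = a) ∨
      ∃ φ : ℕ → ℕ, StrictMono φ ∧ StrictAnti fun i => (ofLex (c (φ i))).2 := by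
  obtain ⟨M, hM⟩ :=
    WellFoundedLT.antitone_chain_condition (Prod.Lex.monotone_fst_ofLex.comp_antitone hc)
  replace hM : ∀ m, M ≤ m → (ofLex (c m)).1 = (ofLex (c M)).1 := fun m hm => (hM m hm).symm
  have hsnd : Antitone fun i => (ofLex (c (M + i))).2 := fun i j hij => by
    have hle := hc (Nat.add_le_add_left hij M)
    rw [← toLex_ofLex (c (M + i)), ← toLex_ofLex (c (M + j)), Prod.Lex.toLex_le_toLex] at hle
    have hfst : (ofLex (c (M + j))).1 = (ofLex (c (M + i))).1 :=
      (hM _ (by omega)).trans (hM _ (by omega)).symm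
    rcases hle with hlt | ⟨-, hle⟩
    · exact absurd hlt (by simp [hfst])
    · exact hle
  rcases hsnd.eventually_const_or_exists_strictAnti_comp with ⟨b, hb⟩ | ⟨φ, hφ, hanti⟩
  · refine Or.inl ⟨toLex ((ofLex (c M)).1, b), ?_⟩
    obtain ⟨K, hK⟩ := eventually_atTop.1 hb
    refine eventually_atTop.2 ⟨M + K, fun i hi => ?_⟩
    obtain ⟨k, rfl⟩ := Nat.exists_eq_add_of_le (le_of_add_le_left hi)
    rw [← hK k (by omega), ← hM (M + k) (by omega)]
    rfl
  · exact Or.inr ⟨(M + ·) ∘ φ, (strictMono_id.const_add M).comp hφ, hanti⟩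

theorem StrictAnti.exists_strictAnti_snd_column_or_forall_eventually_prefix {α β : Type*}
    [LinearOrder α] [WellFoundedLT α] [LinearOrder β] {s : ℕ → List (α ×ₗ β)}
    (hs : StrictAnti s) :
    (∃ (t : ℕ) (φ : ℕ → ℕ) (c : ℕ → α ×ₗ β), StrictMono φ ∧
        StrictAnti (fun i => (ofLex (c i)).2) ∧ ∀ i, (s (φ i))[t]? = some (c i)) ∨
      ∀ t, ∃ l : List (α ×ₗ β), l.length = t ∧ ∀ᶠ i in atTop, l <+: s i := by
  refine or_iff_not_imp_left.2 fun hcol t => ?_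
  induction t with
  | zero => exact ⟨[], rfl, Eventually.of_forall fun _ => List.nil_prefix⟩
  | succ t ih =>
    obtain ⟨l, rfl, hl⟩ := ih
    obtain ⟨N, hN⟩ := eventually_atTop.1 hl
    have hshift : StrictMono (· + N) := fun _ _ h => Nat.add_lt_add_right h N
    obtain ⟨c, hc, hlc⟩ := StrictAnti.exists_antitone_column (s := fun i => s (i + N))
      (hs.comp_strictMono hshift) fun i => hN (i + N) (Nat.le_add_left N i)
    rcases hc.eventually_const_or_exists_strictAnti_snd with ⟨a, ha⟩ | ⟨φ, hφ, hanti⟩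
    · refine ⟨l ++ [a], by simp, ?_⟩
      rw [← map_add_atTop_eq_nat N, eventually_map]
      exact ha.mono fun i hi => hi ▸ hlc i
    · refine absurd ⟨l.length, (· + N) ∘ φ, c ∘ φ, hshift.comp hφ, hanti,
        fun i => ?_⟩ hcol
      obtain ⟨r, hr⟩ := hlc (φ i)
      rw [Function.comp_apply, ← hr]
      simp

section XOmega

variable {X : Type*}

theorem comp_two_mul (l : List (ℕ × X)) (t : ℕ) :
    comp l (2 * t) = l[t]?.map (Sum.inl ∘ Prod.fst) := by
  simp [comp, Function.comp_def]

theorem comp_two_mul_add_one (l : List (ℕ × X)) (t : ℕ) :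
    comp l (2 * t + 1) = l[t]?.map (Sum.inr ∘ Prod.snd) := by
  simp [comp, Nat.add_div, Function.comp_def]

theorem getElem?_eq_of_comp_eq {τ σ : List (ℕ × X)} {t : ℕ}
    (h₀ : comp τ (2 * t) = comp σ (2 * t)) (h₁ : comp τ (2 * t + 1) = comp σ (2 * t + 1)) :
    τ[t]? = σ[t]? := by
  rw [comp_two_mul, comp_two_mul] at h₀
  rw [comp_two_mul_add_one, comp_two_mul_add_one] at h₁
  cases hτ : τ[t]? <;> cases hσ : σ[t]? <;> simp_all [Prod.ext_iff]

theorem XOmegaLt.map_toLex_lt [LinearOrder X] {τ σ : List (ℕ × X)} (h : XOmegaLt τ σ) :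
    τ.map toLex < σ.map toLex := by
  rcases h with ⟨hpre, hne⟩ | ⟨s, hagree, a, b, ha, hb, hab⟩
  · exact lt_of_le_of_ne (not_lt.1 (hpre.map toLex).le)
      ((List.map_injective_iff.2 toLex.injective).ne hne)
  have hprefix : ∀ j < s / 2, (τ.map toLex)[j]? = (σ.map toLex)[j]? := fun j hj => by
    simp [getElem?_eq_of_comp_eq (hagree (2 * j) (by omega)) (hagree (2 * j + 1) (by omega))]
  obtain ⟨t, rfl | rfl⟩ := Nat.even_or_odd' s
  · rw [comp_two_mul] at ha hb
    obtain ⟨p, hp, rfl⟩ := Option.map_eq_some_iff.1 ha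
    obtain ⟨q, hq, rfl⟩ := Option.map_eq_some_iff.1 hb
    refine List.lt_of_getElem?_lt (i := t) (fun j hj => hprefix j (by omega)) (by simp [hp])
      (by simp [hq]) (Prod.Lex.toLex_lt_toLex.2 (Or.inl (Sum.lex_inl_inl.1 hab)))
  · have hfst := hagree (2 * t) (by omega)
    rw [comp_two_mul_add_one] at ha hb
    obtain ⟨p, hp, rfl⟩ := Option.map_eq_some_iff.1 ha
    obtain ⟨q, hq, rfl⟩ := Option.map_eq_some_iff.1 hb
    rw [comp_two_mul, comp_two_mul, hp, hq] at hfst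
    refine List.lt_of_getElem?_lt (i := t) (fun j hj => hprefix j (by omega)) (by simp [hp])
      (by simp [hq]) (Prod.Lex.toLex_lt_toLex.2 (Or.inr ⟨?_, Sum.lex_inr_inr.1 hab⟩))
    simpa using hfst

theorem IsExpSeq.length_le {p : ℕ × X} {l : List (ℕ × X)} (h : IsExpSeq (p :: l)) :
    l.length ≤ p.1 := by
  induction l generalizing p with
  | nil => simp
  | cons q l ih =>
    obtain ⟨hqp, hq⟩ := List.isChain_cons_cons.1 h
    exact (ih hq).trans_lt hqp

theorem not_forall_exists_eventually_prefix_of_isExpSeq {σs : ℕ → List (ℕ × X)}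
    (hvalid : ∀ i, IsExpSeq (σs i)) :
    ¬ ∀ t, ∃ l : List (ℕ ×ₗ X), l.length = t ∧ ∀ᶠ i in atTop, l <+: (σs i).map toLex := by
  intro h
  obtain ⟨l₁, hl₁, h₁⟩ := h 1
  obtain ⟨p, rfl⟩ := List.length_eq_one_iff.1 hl₁
  obtain ⟨l₂, hl₂, h₂⟩ := h ((ofLex p).1 + 2)
  obtain ⟨i, ⟨r, hr⟩, hi₂⟩ := (h₁.and h₂).exists
  have hlen := hi₂.length_le
  have hexp := hvalid i
  rcases hσ : σs i with _ | ⟨q, rest⟩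
  · simp [hσ] at hr
  · rw [hσ] at hr hlen hexp
    have hpq : p = toLex q := (List.cons_eq_cons.1 hr).1
    rw [List.length_map, hl₂, hpq, ofLex_toLex, List.length_cons] at hlen
    have hrest := hexp.length_le
    omega

end XOmega

/-- every infinite `<_{X^ω}`-descending sequence contains an infinite
`<_X`-descending sequence: there are `t : ℕ` and a strictly increasing `h : ℕ → ℕ` such that
every `σ_{h(i)}` has at least `t+1` pairs and the `t`-th `X`-coefficients of the `σ_{h(i)}`
form a strictly `<_X`-decreasing sequence. -/
theorem stmt_4 {X : Type*} [LinearOrder X] (σs : ℕ → List (ℕ × X))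
    (hvalid : ∀ i, IsExpSeq (σs i))
    (hdesc : ∀ i, XOmegaLt (σs (i + 1)) (σs i)) :
    ∃ (t : ℕ) (h : ℕ → ℕ), StrictMono h ∧
      (∀ i, t + 1 ≤ (σs (h i)).length) ∧
      ∀ i j, i < j → ∀ p q : ℕ × X,
        (σs (h i))[t]? = some p → (σs (h j))[t]? = some q → q.2 < p.2 := by
  have hs : StrictAnti fun i => (σs i).map toLex :=
    strictAnti_nat_of_succ_lt fun i => (hdesc i).map_toLex_lt
  obtain ⟨t, φ, c, hφ, hc, hcol⟩ :=
    hs.exists_strictAnti_snd_column_or_forall_eventually_prefix.resolve_right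
      (not_forall_exists_eventually_prefix_of_isExpSeq hvalid)
  have hentry : ∀ i, (σs (φ i))[t]? = some (ofLex (c i)) := fun i => by
    obtain ⟨p, hp, hpc⟩ := Option.map_eq_some_iff.1 ((List.getElem?_map ..).symm.trans (hcol i))
    rw [hp, ← hpc, ofLex_toLex]
  refine ⟨t, φ, hφ, fun i => (List.getElem?_eq_some_iff.1 (hentry i)).1, fun i j hij p q hp hq => ?_⟩
  rw [hentry, Option.some_inj] at hp hq
  exact hp ▸ hq ▸ hc hij
end

section
/- Let X be a linear order whose strict order relation <_X is well-founded. Then the strict order <_{X^ω} on X^ω is well-founded; i.e., if X is well-ordered then X^ω is well-ordered. -/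
/-!
Reading the components one after the other, `<_{X^ω}` is the lexicographic order on lists of
pairs `(b, a)`, themselves ordered lexicographically. On lists with strictly decreasing exponents
this order is reflected by the coefficient map `τ ↦ (b ↦ a)` into finitely supported functions
`ℕ →₀ WithZero X`, where `0` marks an absent exponent and functions are compared at the largest
exponent where they differ. That order is well-founded when `X` is (`Finsupp.Lex.wellFounded'`).
-/

section Components

variable {X : Type*}

@[simp] lemma comp_nil (s : ℕ) : comp ([] : List (ℕ × X)) s = none := by
  simp [comp]

@[simp] lemma comp_cons_zero (p : ℕ × X) (l : List (ℕ × X)) :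
    comp (p :: l) 0 = some (Sum.inl p.1) := by
  simp [comp]

@[simp] lemma comp_cons_one (p : ℕ × X) (l : List (ℕ × X)) :
    comp (p :: l) 1 = some (Sum.inr p.2) := by
  simp [comp]

@[simp] lemma comp_cons_add_two (p : ℕ × X) (l : List (ℕ × X)) (s : ℕ) :
    comp (p :: l) (s + 2) = comp l s := by
  simp [comp]

end Components

section ListLex

variable {X : Type*}

lemma listLex_of_comp_lt [LT X] : ∀ (τ σ : List (ℕ × X)) (s : ℕ) {a b : ℕ ⊕ X},
    (∀ r, r < s → comp τ r = comp σ r) → comp τ s = some a → comp σ s = some b →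
    Sum.Lex (· < ·) (· < ·) a b → List.Lex (Prod.Lex (· < ·) (· < ·)) τ σ
  | [], _, _, _, _, _, hτ, _, _ => by simp at hτ
  | _ :: _, [], _, _, _, _, _, hσ, _ => by simp at hσ
  | p :: τ, q :: σ, 0, _, _, _, hτ, hσ, hab => by
    simp only [comp_cons_zero, Option.some.injEq] at hτ hσ
    subst hτ hσ
    exact .rel (.left _ _ (Sum.lex_inl_inl.mp hab))
  | p :: τ, q :: σ, 1, _, _, heq, hτ, hσ, hab => by
    simp only [comp_cons_one, Option.some.injEq] at hτ hσ
    subst hτ hσ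
    have hfst : p.1 = q.1 := by simpa using heq 0 one_pos
    obtain ⟨b, x⟩ := p
    obtain ⟨c, y⟩ := q
    obtain rfl : b = c := hfst
    exact .rel (.right _ (Sum.lex_inr_inr.mp hab))
  | p :: τ, q :: σ, s + 2, _, _, heq, hτ, hσ, hab => by
    have hpq : p = q := by
      have h0 := heq 0 (by omega)
      have h1 := heq 1 (by omega)
      simp only [comp_cons_zero, comp_cons_one, Option.some.injEq, Sum.inl.injEq,
        Sum.inr.injEq] at h0 h1
      exact Prod.ext h0 h1
    subst hpq
    refine .cons (listLex_of_comp_lt τ σ s (fun r hr => ?_) (by simpa using hτ)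
      (by simpa using hσ) hab)
    simpa using heq (r + 2) (by omega)

lemma XOmegaLt.listLex [LinearOrder X] {τ σ : List (ℕ × X)} (h : XOmegaLt τ σ) :
    List.Lex (Prod.Lex (· < ·) (· < ·)) τ σ := by
  rcases h with ⟨⟨_ | ⟨p, t⟩, rfl⟩, hne⟩ | ⟨s, heq, a, b, hτ, hσ, hab⟩
  · simp at hne
  · simpa using List.Lex.append_left _ (List.Lex.nil (a := p) (l := t)) τ
  · exact listLex_of_comp_lt τ σ s heq hτ hσ hab

end ListLex

lemma IsExpSeq.pairwise {X : Type*} {l : List (ℕ × X)} (h : IsExpSeq l) :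
    l.Pairwise (·.1 > ·.1) :=
  haveI : Trans (·.1 > ·.1 : ℕ × X → ℕ × X → Prop) (·.1 > ·.1 : ℕ × X → ℕ × X → Prop)
      (·.1 > ·.1 : ℕ × X → ℕ × X → Prop) :=
    ⟨fun h₁ h₂ => h₂.trans h₁⟩
  List.isChain_iff_pairwise.mp h

section Coeffs

variable {X : Type*}

noncomputable def coeffs : List (ℕ × X) → ℕ →₀ WithZero X
  | [] => 0
  | p :: l => (coeffs l).update p.1 p.2

@[simp] lemma coeffs_nil : (coeffs [] : ℕ →₀ WithZero X) = 0 := rfl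

lemma coeffs_cons_apply (p : ℕ × X) (l : List (ℕ × X)) (n : ℕ) :
    coeffs (p :: l) n = if n = p.1 then (p.2 : WithZero X) else coeffs l n :=
  Finsupp.update_apply _ _ _ _

lemma coeffs_apply_eq_zero {l : List (ℕ × X)} {n : ℕ} (h : ∀ q ∈ l, q.1 ≠ n) :
    coeffs l n = 0 := by
  induction l with
  | nil => rfl
  | cons p l ih =>
    simp only [List.mem_cons, forall_eq_or_imp] at h
    rw [coeffs_cons_apply, if_neg (Ne.symm h.1), ih h.2]

lemma coeffs_apply_eq_zero_of_lt {p : ℕ × X} {l : List (ℕ × X)}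
    (h : (p :: l).Pairwise (·.1 > ·.1)) {n : ℕ} (hn : p.1 < n) : coeffs (p :: l) n = 0 := by
  refine coeffs_apply_eq_zero fun q hq => ?_
  rcases List.mem_cons.mp hq with rfl | hq
  exacts [hn.ne, ((List.pairwise_cons.mp h).1 q hq |>.trans hn).ne]

variable [LT X]

lemma coeffs_lex_of_listLex {τ σ : List (ℕ × X)}
    (hτ : τ.Pairwise (·.1 > ·.1)) (hσ : σ.Pairwise (·.1 > ·.1))
    (h : List.Lex (Prod.Lex (· < ·) (· < ·)) τ σ) :
    Finsupp.Lex (· > ·) (· < ·) (coeffs τ) (coeffs σ) := by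
  induction h with
  | @nil q σ =>
    refine ⟨q.1, fun d hd => ?_, ?_⟩
    · simp [coeffs_apply_eq_zero_of_lt hσ hd]
    · simp [coeffs_cons_apply]
  | @cons p τ σ _ ih =>
    obtain ⟨hpσ, hσ'⟩ := List.pairwise_cons.mp hσ
    obtain ⟨j, hagree, hlt⟩ := ih (List.pairwise_cons.mp hτ).2 hσ'
    have hj : j < p.1 := by
      by_contra! hj
      exact WithZero.not_lt_zero _
        (coeffs_apply_eq_zero (fun q hq => ((hpσ q hq).trans_le hj).ne) ▸ hlt)
    refine ⟨j, fun d hd => ?_, ?_⟩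
    · simp only [coeffs_cons_apply, hagree d hd]
    · simpa only [coeffs_cons_apply, if_neg hj.ne] using hlt
  | @rel p τ q σ hpq =>
    have hle : p.1 ≤ q.1 := by
      rcases hpq with ⟨_, _, h⟩ | ⟨_, h⟩
      exacts [h.le, le_rfl]
    refine ⟨q.1, fun d hd => ?_, ?_⟩
    · rw [coeffs_apply_eq_zero_of_lt hτ (hle.trans_lt hd), coeffs_apply_eq_zero_of_lt hσ hd]
    · rw [coeffs_cons_apply q, if_pos rfl]
      rcases hpq with ⟨_, _, h⟩ | ⟨_, h⟩
      · rw [coeffs_apply_eq_zero_of_lt hτ h]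
        exact WithZero.zero_lt_coe _
      · rw [coeffs_cons_apply, if_pos rfl]
        exact WithZero.coe_lt_coe.mpr h

end Coeffs

lemma WithZero.wellFounded_lt {X : Type*} [LT X] (hwf : WellFounded ((· < ·) : X → X → Prop)) :
    WellFounded ((· < ·) : WithZero X → WithZero X → Prop) :=
  haveI : WellFoundedLT X := ⟨hwf⟩
  (_root_.wellFounded_lt : WellFounded ((· < ·) : WithBot X → WithBot X → Prop))

/-- if the strict order of the linear order `X` is well-founded, then the strict
order `<_{X^ω}` on `X^ω` (the valid exponent-decreasing sequences) is well-founded. -/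
theorem stmt_5 {X : Type*} [LinearOrder X]
    (hwf : WellFounded ((· < ·) : X → X → Prop)) :
    WellFounded (fun τ σ : {l : List (ℕ × X) // IsExpSeq l} => XOmegaLt τ.1 σ.1) := by
  have hlex : WellFounded (Finsupp.Lex (· > ·) (· < ·) : (ℕ →₀ WithZero X) → _ → Prop) :=
    Finsupp.Lex.wellFounded' (fun _ => WithZero.not_lt_zero _) (WithZero.wellFounded_lt hwf)
      wellFounded_lt
  refine Subrelation.wf ?_ (InvImage.wf (fun τ : {l // IsExpSeq l} => coeffs τ.1) hlex)
  intro τ σ h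
  exact coeffs_lex_of_listLex τ.2.pairwise σ.2.pairwise h.listLex
end

section
/- Fix n ∈ ℕ and a sequence (U_i)_{i≥0} of subsets of {1,…,n}, with the reset functions and the cycle-completion relation defined as in the context. Then for every i ≥ 0, V_i := ⋃_{reset_{U_i}(i) < h ≤ i} U_h is the UNIQUE subset of {1,…,n} completing a cycle at stage i: if W ⊆ {1,…,n} completes a cycle at stage i, then W = V_i. -/
/-!
Write `r_i(A)` for `resetAux n U i A`, so that `V_i = ⋃_{r_i(U_i) < h ≤ i} U_h`. Existence and
uniqueness are proved by strong induction on `i`, together with the laminarity of the intervals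
`(r_i(U_i), i]`.

Once every `V_j` with `j < i` is the unique set completing a cycle at stage `j`, the reset becomes
`r_i(A) = max {j < i | A ⊆ V_j}` (or `-1` if there is no such `j`). Laminarity follows, and by
laminarity every `U_k` with `s = r_i(U_i) < k ≤ i` lies in `V_s`, so `V_i ⊆ V_s` and
`r_i(V_i) = s`: `V_i` completes a cycle. If `W` completes a cycle, then `U_i ⊆ W`, so
`w = r_i(W) ≤ s`; if `w < s`, the last stage `j < i` with `w < j` and `r_j(U_j) ≤ w` has
`W ⊆ V_j`, contradicting `r_i(W) = w < j`.
-/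

-- `resetAux n U i A` is the integer `reset_A(i)` of the paper: `reset_A(0) = -1`, and
-- `reset_A(i+1) = i` if some `B ⊆ {1,…,n}` with `B ⊇ A` completes a cycle at stage `i`
-- (i.e. `⋃_{reset_B(i) < h ≤ i} U_h = B`), and `reset_A(i+1) = reset_A(i)` otherwise.
open Classical in
noncomputable def resetAux (n : ℕ) (U : ℕ → Finset ℕ) : ℕ → Finset ℕ → ℤ
  | 0 => fun _ => -1
  | i + 1 => fun A =>
      if ∃ B, B ⊆ Finset.Icc 1 n ∧ A ⊆ B ∧
          ((Finset.range (i + 1)).filter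
            (fun h : ℕ => resetAux n U i B < (h : ℤ))).biUnion U = B
      then (i : ℤ)
      else resetAux n U i A

/-- `B` completes a cycle at stage `i`: `⋃_{reset_B(i) < h ≤ i} U_h = B`. -/
def CompletesCycle (n : ℕ) (U : ℕ → Finset ℕ) (i : ℕ) (B : Finset ℕ) : Prop :=
  ((Finset.range (i + 1)).filter (fun h : ℕ => resetAux n U i B < (h : ℤ))).biUnion U = B

/-- `V_i := ⋃_{reset_{U_i}(i) < h ≤ i} U_h`. -/
noncomputable def V (n : ℕ) (U : ℕ → Finset ℕ) (i : ℕ) : Finset ℕ :=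
  ((Finset.range (i + 1)).filter (fun h : ℕ => resetAux n U i (U i) < (h : ℤ))).biUnion U

open Finset

section unionIoc

variable {α : Type*} [DecidableEq α] {U : ℕ → Finset α}

-- `⋃_{a < h ≤ b} U_h`; the lower end is an integer so that it can be the reset value `-1`.
def unionIoc (U : ℕ → Finset α) (a : ℤ) (b : ℕ) : Finset α :=
  ((range (b + 1)).filter (fun h : ℕ => a < (h : ℤ))).biUnion U

lemma subset_unionIoc {a : ℤ} {h b : ℕ} (ha : a < h) (hb : h ≤ b) : U h ⊆ unionIoc U a b :=
  subset_biUnion_of_mem U (by simp [ha, hb])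

lemma unionIoc_subset_iff {a : ℤ} {b : ℕ} {X : Finset α} :
    unionIoc U a b ⊆ X ↔ ∀ h : ℕ, a < h → h ≤ b → U h ⊆ X := by
  simp only [unionIoc, biUnion_subset, mem_filter, mem_range, Nat.lt_succ_iff, and_imp]
  exact forall_congr' fun _ => forall_comm

lemma unionIoc_mono {a a' : ℤ} {b b' : ℕ} (ha : a' ≤ a) (hb : b ≤ b') :
    unionIoc U a b ⊆ unionIoc U a' b' :=
  unionIoc_subset_iff.2 fun _ h1 h2 => subset_unionIoc (ha.trans_lt h1) (h2.trans hb)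

lemma unionIoc_subset {X : Finset α} (hU : ∀ i, U i ⊆ X) (a : ℤ) (b : ℕ) :
    unionIoc U a b ⊆ X :=
  biUnion_subset.2 fun h _ => hU h

end unionIoc

section resetAux

variable {n : ℕ} {U : ℕ → Finset ℕ} {i : ℕ} {A B : Finset ℕ}

lemma completesCycle_iff : CompletesCycle n U i B ↔ unionIoc U (resetAux n U i B) i = B :=
  Iff.rfl

lemma V_eq_unionIoc : V n U i = unionIoc U (resetAux n U i (U i)) i := rfl

open Classical in
lemma resetAux_succ (i : ℕ) (A : Finset ℕ) :
    resetAux n U (i + 1) A =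
      if ∃ B, B ⊆ Icc 1 n ∧ A ⊆ B ∧ CompletesCycle n U i B then (i : ℤ)
      else resetAux n U i A :=
  rfl

lemma resetAux_succ_of_completesCycle (hB : B ⊆ Icc 1 n) (hAB : A ⊆ B)
    (hc : CompletesCycle n U i B) : resetAux n U (i + 1) A = i := by
  rw [resetAux_succ, if_pos ⟨B, hB, hAB, hc⟩]

variable (n U) in
lemma neg_one_le_resetAux : ∀ i A, -1 ≤ resetAux n U i A
  | 0, _ => le_rfl
  | i + 1, A => by
    rw [resetAux_succ]
    split
    · omega
    · exact neg_one_le_resetAux i A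

variable (n U) in
lemma resetAux_lt : ∀ i A, resetAux n U i A < i
  | 0, _ => by simp [resetAux]
  | i + 1, A => by
    have := resetAux_lt i A
    rw [resetAux_succ]
    split <;> omega

variable (n U) in
lemma resetAux_eq_neg_one_or_exists (i : ℕ) (A : Finset ℕ) :
    resetAux n U i A = -1 ∨ ∃ s < i, resetAux n U i A = s := by
  have hlt := resetAux_lt n U i A
  rcases (neg_one_le_resetAux n U i A).eq_or_lt with h | h
  · omega
  · exact .inr ⟨(resetAux n U i A).toNat, by omega, by omega⟩

lemma resetAux_mono {i i' : ℕ} (h : i ≤ i') (A : Finset ℕ) :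
    resetAux n U i A ≤ resetAux n U i' A := by
  induction i', h using Nat.le_induction with
  | base => exact le_rfl
  | succ i' _ ih =>
    refine ih.trans ?_
    rw [resetAux_succ]
    split
    · exact (resetAux_lt n U i' A).le
    · exact le_rfl

lemma resetAux_anti (i : ℕ) {A A' : Finset ℕ} (h : A ⊆ A') :
    resetAux n U i A' ≤ resetAux n U i A := by
  induction i with
  | zero => exact le_rfl
  | succ i ih =>
    by_cases hc : ∃ B, B ⊆ Icc 1 n ∧ A' ⊆ B ∧ CompletesCycle n U i B
    · obtain ⟨B, hB, hAB, hcB⟩ := hc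
      rw [resetAux_succ_of_completesCycle hB hAB hcB,
        resetAux_succ_of_completesCycle hB (h.trans hAB) hcB]
    · rw [resetAux_succ, if_neg hc]
      exact ih.trans (resetAux_mono (Nat.le_succ i) A)

end resetAux

def IsUniqueCycle (n : ℕ) (U : ℕ → Finset ℕ) (i : ℕ) : Prop :=
  CompletesCycle n U i (V n U i) ∧
    ∀ W, W ⊆ Icc 1 n → CompletesCycle n U i W → W = V n U i

/-- For `r_i(A) < j < i`, the interval `(r_j(U_j), j]` lies inside `(r_i(A), i]`. -/
def IsLaminarAt (n : ℕ) (U : ℕ → Finset ℕ) (i : ℕ) : Prop :=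
  ∀ (A : Finset ℕ) (j : ℕ), resetAux n U i A < j → j < i →
    resetAux n U i A ≤ resetAux n U j (U j)

section induction

variable {n : ℕ} {U : ℕ → Finset ℕ} {i : ℕ} {A : Finset ℕ}

lemma le_resetAux_of_subset_V (hU : ∀ i, U i ⊆ Icc 1 n) (hg : ∀ j < i, IsUniqueCycle n U j)
    {j : ℕ} (hji : j < i) (hA : A ⊆ V n U j) : (j : ℤ) ≤ resetAux n U i A :=
  (resetAux_succ_of_completesCycle (unionIoc_subset hU _ _) hA (hg j hji).1).ge.trans
    (resetAux_mono hji A)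

lemma subset_V_of_resetAux_eq (hg : ∀ j < i, IsUniqueCycle n U j) {s : ℕ}
    (h : resetAux n U i A = s) : A ⊆ V n U s := by
  induction i with
  | zero => simp [resetAux] at h
  | succ i ih =>
    rw [resetAux_succ] at h
    split_ifs at h with hc
    · obtain ⟨B, hB, hAB, hcB⟩ := hc
      obtain rfl : i = s := by exact_mod_cast h
      exact (hg i (lt_add_one i)).2 B hB hcB ▸ hAB
    · exact ih (fun j hj => hg j (hj.trans (lt_add_one i))) h

lemma unionIoc_subset_V (hg : ∀ j < i, IsUniqueCycle n U j) {s : ℕ}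
    (hs : ∀ k : ℕ, s < k → k ≤ i → (s : ℤ) ≤ resetAux n U k (U k)) :
    unionIoc U s i ⊆ V n U s := by
  refine unionIoc_subset_iff.2 fun h hsh hhi => ?_
  induction h using Nat.strong_induction_on with
  | _ h ih =>
    have hsh' : s < h := by exact_mod_cast hsh
    obtain ⟨t, hth, ht⟩ := (resetAux_eq_neg_one_or_exists n U h (U h)).resolve_left
      (by have := hs h hsh' hhi; omega)
    have hUt : U h ⊆ V n U t := subset_V_of_resetAux_eq (fun j hj => hg j (hj.trans_le hhi)) ht
    have hst : s ≤ t := by have := hs h hsh' hhi; omega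
    rcases hst.eq_or_lt with rfl | hst
    · exact hUt
    · -- `V_t = ⋃_{r_t(U_t) < k ≤ t} U_k` with `s ≤ r_t(U_t)` and `t < h`
      refine hUt.trans ((unionIoc_mono (hs t hst (hth.le.trans hhi)) le_rfl).trans
        (unionIoc_subset_iff.2 fun k hsk hkt => ?_))
      exact ih k (by omega) hsk (hkt.trans (hth.le.trans hhi))

lemma isLaminarAt_of_lt (hU : ∀ i, U i ⊆ Icc 1 n) (hg : ∀ j < i, IsUniqueCycle n U j)
    (hL : ∀ j < i, IsLaminarAt n U j) : IsLaminarAt n U i := by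
  intro A j hAj hji
  by_contra! hlt
  obtain ⟨s, -, hs⟩ := (resetAux_eq_neg_one_or_exists n U i A).resolve_left
    (by have := neg_one_le_resetAux n U j (U j); omega)
  have hsj : s < j := by omega
  have hVs : V n U s ⊆ V n U j := unionIoc_mono (hL j hji (U j) s (by omega) hsj) hsj.le
  have := le_resetAux_of_subset_V hU hg hji ((subset_V_of_resetAux_eq hg hs).trans hVs)
  omega

lemma completesCycle_V (hU : ∀ i, U i ⊆ Icc 1 n) (hg : ∀ j < i, IsUniqueCycle n U j)
    (hL : IsLaminarAt n U i) : CompletesCycle n U i (V n U i) := by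
  suffices resetAux n U i (V n U i) = resetAux n U i (U i) by
    rw [completesCycle_iff, this]; rfl
  have hUV : U i ⊆ V n U i := subset_unionIoc (resetAux_lt n U i (U i)) le_rfl
  refine le_antisymm (resetAux_anti i hUV) ?_
  obtain hneg | ⟨s, hsi, hs⟩ := resetAux_eq_neg_one_or_exists n U i (U i)
  · exact hneg ▸ neg_one_le_resetAux n U i _
  · have hVV : V n U i ⊆ V n U s := by
      rw [V_eq_unionIoc, hs]
      refine unionIoc_subset_V hg fun k hsk hki => ?_
      rcases hki.eq_or_lt with rfl | hki
      · exact hs.ge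
      · exact hs ▸ hL (U i) k (by omega) hki
    exact hs ▸ le_resetAux_of_subset_V hU hg hsi hVV

lemma exists_last_stage (hL : ∀ k ≤ i, IsLaminarAt n U k) {w : ℤ} (hw : -1 ≤ w)
    (hwi : w < resetAux n U i (U i)) :
    ∃ j : ℕ, w < j ∧ j < i ∧ resetAux n U j (U j) ≤ w ∧
      ∀ k : ℕ, j < k → k ≤ i → (j : ℤ) ≤ resetAux n U k (U k) := by
  classical
  let P : ℕ → Prop := fun k => w < k ∧ resetAux n U k (U k) ≤ w
  have hi := resetAux_lt n U i (U i)
  have hP : P (w + 1).toNat :=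
    ⟨by omega, by have := resetAux_lt n U (w + 1).toNat (U (w + 1).toNat); omega⟩
  set j := Nat.findGreatest P i
  have hPj : P j := Nat.findGreatest_spec (m := (w + 1).toNat) (by omega) hP
  have hnP : ∀ k, j < k → k ≤ i → ¬ P k := fun k => Nat.findGreatest_is_greatest
  have hji : j < i := by
    refine (Nat.findGreatest_le i).lt_of_ne fun h => ?_
    rw [← h] at hwi
    exact hPj.2.not_gt hwi
  refine ⟨j, hPj.1, hji, hPj.2, fun k hjk hki => ?_⟩
  by_contra! hkj
  have := hL k hki (U k) j hkj (by exact_mod_cast hjk)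
  exact hnP k hjk hki ⟨by omega, by omega⟩

lemma eq_V_of_completesCycle (hU : ∀ i, U i ⊆ Icc 1 n) (hg : ∀ j < i, IsUniqueCycle n U j)
    (hL : ∀ k ≤ i, IsLaminarAt n U k) {W : Finset ℕ} (hWc : CompletesCycle n U i W) :
    W = V n U i := by
  have hW : unionIoc U (resetAux n U i W) i = W := hWc
  have hUW : U i ⊆ W := hW ▸ subset_unionIoc (resetAux_lt n U i W) le_rfl
  rcases (resetAux_anti i hUW).eq_or_lt with heq | hlt
  · rw [← hW, V_eq_unionIoc, heq]
  obtain ⟨j, hwj, hji, hjw, hj⟩ := exists_last_stage hL (neg_one_le_resetAux n U i W) hlt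
  have hWV : W ⊆ V n U j := by
    rw [← hW, unionIoc_subset_iff]
    intro h hwh hhi
    rcases le_or_gt h j with hhj | hjh
    · exact subset_unionIoc (hjw.trans_lt hwh) hhj
    · exact (subset_unionIoc (by exact_mod_cast hjh) hhi).trans (unionIoc_subset_V hg hj)
  have := le_resetAux_of_subset_V hU hg hji hWV
  omega

lemma isUniqueCycle_and_isLaminarAt (hU : ∀ i, U i ⊆ Icc 1 n) (i : ℕ) :
    IsUniqueCycle n U i ∧ IsLaminarAt n U i := by
  induction i using Nat.strong_induction_on with
  | _ i ih =>
    have hg : ∀ j < i, IsUniqueCycle n U j := fun j hj => (ih j hj).1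
    have hL := isLaminarAt_of_lt hU hg fun j hj => (ih j hj).2
    have hL' : ∀ k ≤ i, IsLaminarAt n U k := fun k hk => by
      rcases hk.eq_or_lt with rfl | hk
      exacts [hL, (ih k hk).2]
    exact ⟨⟨completesCycle_V hU hg hL, fun W _ hW => eq_V_of_completesCycle hU hg hL' hW⟩, hL⟩

end induction

/-- for every `i`, `V_i` is the unique subset of `{1,…,n}` completing a cycle at
stage `i`: any `W ⊆ {1,…,n}` completing a cycle at stage `i` equals `V_i`. -/
theorem stmt_11 (n : ℕ) (U : ℕ → Finset ℕ) (hU : ∀ i, U i ⊆ Finset.Icc 1 n) :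
    ∀ i, CompletesCycle n U i (V n U i) ∧
      ∀ W, W ⊆ Finset.Icc 1 n → CompletesCycle n U i W → W = V n U i := by
  intro i
  exact (isUniqueCycle_and_isLaminarAt hU i).1
end
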